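/- For a Hom-entwining structure [(A,α),(C,γ)]_ψ with associated Hom-coring C=(A⊗C,α⊗γ), the map φ:*C→Hom^H(C,A), φ(ξ)(c)=ξ(1⊗γ^{-1}(c)), is an algebra anti-isomorphism from (*C,*^l,ε_C) to the Koppinen smash (Hom^H(C,A),*_ψ,ηε), with inverse f↦(a⊗c↦af(c)); i.e., φ(ξ*^lξ')=φ(ξ')*_ψφ(ξ) and φ(ε_C)=ηε. -/
import Mathlib


open TensorProduct

namespace HomPaper

variable {k : Type*} [CommRing k]
variable {A C V : Type*}
variable [AddCommGroup A] [Module k A] [AddCommGroup C] [Module k C]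
variable [AddCommGroup V] [Module k V]

/-- Monoidal Hom-algebra axioms. -/
def IsHomAlgebra (α : A ≃ₗ[k] A) (mul : A →ₗ[k] A →ₗ[k] A) (one : A) : Prop :=
  (∀ a b c, mul (α a) (mul b c) = mul (mul a b) (α c)) ∧
  (∀ a, mul a one = α a) ∧ (∀ a, mul one a = α a) ∧
  (∀ a b, α (mul a b) = mul (α a) (α b)) ∧ α one = one

/-- Monoidal Hom-coalgebra axioms. -/
def IsHomCoalgebra (γ : C ≃ₗ[k] C) (Δ : C →ₗ[k] C ⊗[k] C) (ε : C →ₗ[k] k) : Prop :=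
  (∀ c, TensorProduct.map γ.symm.toLinearMap Δ (Δ c)
      = TensorProduct.assoc k C C C (TensorProduct.map Δ γ.symm.toLinearMap (Δ c))) ∧
  (∀ c, TensorProduct.lid k C (TensorProduct.map ε LinearMap.id (Δ c)) = γ.symm c) ∧
  (∀ c, TensorProduct.rid k C (TensorProduct.map LinearMap.id ε (Δ c)) = γ.symm c) ∧
  (∀ c, Δ (γ c) = TensorProduct.map γ.toLinearMap γ.toLinearMap (Δ c)) ∧
  (∀ c, ε (γ c) = ε c)

/-- Hom-entwining structure axioms for ψ : C ⊗ A → A ⊗ C, ψ(c⊗a) = a_κ ⊗ c^κ. -/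
def IsHomEntwining (α : A ≃ₗ[k] A) (γ : C ≃ₗ[k] C) (mul : A →ₗ[k] A →ₗ[k] A) (one : A)
    (Δ : C →ₗ[k] C ⊗[k] C) (ε : C →ₗ[k] k) (ψ : C ⊗[k] A →ₗ[k] A ⊗[k] C) : Prop :=
  -- (aa')_κ ⊗ γ(c)^κ = a_κ a'_λ ⊗ γ(c^{κλ})
  (∀ c a a', ψ (γ c ⊗ₜ mul a a')
      = TensorProduct.map (TensorProduct.lift mul) γ.toLinearMap
          ((TensorProduct.assoc k A A C).symm
            (TensorProduct.map LinearMap.id ψ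
              (TensorProduct.assoc k A C A (ψ (c ⊗ₜ a) ⊗ₜ a'))))) ∧
  -- α⁻¹(a_κ) ⊗ c^κ₁ ⊗ c^κ₂ = α⁻¹(a)_{κλ} ⊗ c₁^λ ⊗ c₂^κ
  (∀ c a, TensorProduct.map α.symm.toLinearMap Δ (ψ (c ⊗ₜ a))
      = TensorProduct.assoc k A C C
          (TensorProduct.map ψ LinearMap.id
            ((TensorProduct.assoc k C A C).symm
              (TensorProduct.map LinearMap.id ψ
                (TensorProduct.assoc k C C A (Δ c ⊗ₜ α.symm a)))))) ∧
  -- 1_κ ⊗ c^κ = 1 ⊗ c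
  (∀ c, ψ (c ⊗ₜ one) = one ⊗ₜ c) ∧
  -- a_κ ε(c^κ) = a ε(c)
  (∀ c a, TensorProduct.rid k A (TensorProduct.map LinearMap.id ε (ψ (c ⊗ₜ a))) = ε c • a) ∧
  -- ψ is a morphism in the Hom-category
  (∀ c a, ψ (γ c ⊗ₜ α a) = TensorProduct.map α.toLinearMap γ.toLinearMap (ψ (c ⊗ₜ a)))

/-- The relations defining `V ⊗_A V` (on top of base relations `R₀` defining the coring
module as a quotient of `V`). -/
def corRel (R₀ : Submodule k V) (χ : V ≃ₗ[k] V)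
    (lact : A →ₗ[k] V →ₗ[k] V) (ract : V →ₗ[k] A →ₗ[k] V) : Submodule k (V ⊗[k] V) :=
  Submodule.span k
    ({x | ∃ v a w, x = ract v a ⊗ₜ w - χ v ⊗ₜ lact a (χ.symm w)} ∪
     {x | ∃ r w, r ∈ R₀ ∧ (x = r ⊗ₜ w ∨ x = w ⊗ₜ r)})

/-- Induced left A-action on `V ⊗_A V` (on representatives). -/
noncomputable def lact2 (α : A ≃ₗ[k] A) (χ : V ≃ₗ[k] V) (lact : A →ₗ[k] V →ₗ[k] V) (a : A) :
    V ⊗[k] V →ₗ[k] V ⊗[k] V :=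
  TensorProduct.map (lact (α.symm a)) χ.toLinearMap

/-- Induced right A-action on `V ⊗_A V` (on representatives). -/
noncomputable def ract2 (α : A ≃ₗ[k] A) (χ : V ≃ₗ[k] V) (ract : V →ₗ[k] A →ₗ[k] V) (a : A) :
    V ⊗[k] V →ₗ[k] V ⊗[k] V :=
  TensorProduct.map χ.toLinearMap (ract.flip (α.symm a))

/-- The relations defining `V ⊗_A (V ⊗_A V)`. -/
def corRel3 (R₀ : Submodule k V) (α : A ≃ₗ[k] A) (χ : V ≃ₗ[k] V)
    (lact : A →ₗ[k] V →ₗ[k] V) (ract : V →ₗ[k] A →ₗ[k] V) :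
    Submodule k (V ⊗[k] (V ⊗[k] V)) :=
  Submodule.span k
    ({x | ∃ v a w, x = ract v a ⊗ₜ w - χ v ⊗ₜ lact2 α χ lact a w} ∪
     {x | ∃ v w, w ∈ corRel R₀ χ lact ract ∧ x = v ⊗ₜ w} ∪
     {x | ∃ r w, r ∈ R₀ ∧ x = r ⊗ₜ w})

/-- `(V,χ)` (modulo the relations `R₀`) together with the A-bimodule structure
`lact`, `ract`, comultiplication representative `Δ` and counit `ε` is an
`(A,α)`-Hom-coring: all axioms are stated on representatives, under the quotient
projections by `R₀` resp. the tensor-relation submodules. -/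
def IsHomCoring (α : A ≃ₗ[k] A) (mul : A →ₗ[k] A →ₗ[k] A) (one : A)
    (χ : V ≃ₗ[k] V) (lact : A →ₗ[k] V →ₗ[k] V) (ract : V →ₗ[k] A →ₗ[k] V)
    (R₀ : Submodule k V) (Δ : V →ₗ[k] V ⊗[k] V) (ε : V →ₗ[k] A) : Prop :=
  -- (V,χ) is an (A,α)-Hom-bimodule
  (∀ a b v, Submodule.Quotient.mk (p := R₀) (lact (mul a b) (χ v))
      = Submodule.Quotient.mk (p := R₀) (lact (α a) (lact b v))) ∧
  (∀ v, Submodule.Quotient.mk (p := R₀) (lact one v) = Submodule.Quotient.mk (p := R₀) (χ v)) ∧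
  (∀ v a b, Submodule.Quotient.mk (p := R₀) (ract (χ v) (mul a b))
      = Submodule.Quotient.mk (p := R₀) (ract (ract v a) (α b))) ∧
  (∀ v, Submodule.Quotient.mk (p := R₀) (ract v one) = Submodule.Quotient.mk (p := R₀) (χ v)) ∧
  (∀ a v b, Submodule.Quotient.mk (p := R₀) (ract (lact a v) (α b))
      = Submodule.Quotient.mk (p := R₀) (lact (α a) (ract v b))) ∧
  (∀ a v, Submodule.Quotient.mk (p := R₀) (χ (lact a v))
      = Submodule.Quotient.mk (p := R₀) (lact (α a) (χ v))) ∧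
  (∀ v a, Submodule.Quotient.mk (p := R₀) (χ (ract v a))
      = Submodule.Quotient.mk (p := R₀) (ract (χ v) (α a))) ∧
  (∀ r ∈ R₀, χ r ∈ R₀) ∧
  -- Δ and ε are well defined on the quotient by R₀
  (∀ r ∈ R₀, Submodule.Quotient.mk (p := corRel R₀ χ lact ract) (Δ r) = 0) ∧
  (∀ r ∈ R₀, ε r = 0) ∧
  -- A-bilinearity of Δ
  (∀ a v, Submodule.Quotient.mk (p := corRel R₀ χ lact ract) (Δ (lact a v))
      = Submodule.Quotient.mk (p := corRel R₀ χ lact ract) (lact2 α χ lact a (Δ v))) ∧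
  (∀ v a, Submodule.Quotient.mk (p := corRel R₀ χ lact ract) (Δ (ract v a))
      = Submodule.Quotient.mk (p := corRel R₀ χ lact ract) (ract2 α χ ract a (Δ v))) ∧
  -- A-bilinearity of ε
  (∀ a v, ε (lact a v) = mul a (ε v)) ∧
  (∀ v a, ε (ract v a) = mul (ε v) a) ∧
  -- Hom-coassociativity: χ⁻¹(c₁) ⊗ Δ(c₂) = c₁₁ ⊗ (c₁₂ ⊗ χ⁻¹(c₂))
  (∀ v, Submodule.Quotient.mk (p := corRel3 R₀ α χ lact ract)
        (TensorProduct.map χ.symm.toLinearMap Δ (Δ v))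
      = Submodule.Quotient.mk (p := corRel3 R₀ α χ lact ract)
        (TensorProduct.assoc k V V V (TensorProduct.map Δ χ.symm.toLinearMap (Δ v)))) ∧
  -- counity: ε(c₁)c₂ = c = c₁ε(c₂)
  (∀ v, Submodule.Quotient.mk (p := R₀) (TensorProduct.lift (lact ∘ₗ ε) (Δ v))
      = Submodule.Quotient.mk (p := R₀) v) ∧
  (∀ v, Submodule.Quotient.mk (p := R₀) (TensorProduct.lift (ract.compl₂ ε) (Δ v))
      = Submodule.Quotient.mk (p := R₀) v) ∧
  -- compatibility with the twisting maps
  (∀ v, Submodule.Quotient.mk (p := corRel R₀ χ lact ract) (Δ (χ v))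
      = Submodule.Quotient.mk (p := corRel R₀ χ lact ract)
        (TensorProduct.map χ.toLinearMap χ.toLinearMap (Δ v))) ∧
  (∀ v, ε (χ v) = α (ε v))

end HomPaper

namespace HomPaper

variable {k A C : Type*} [CommRing k]
variable [AddCommGroup A] [Module k A] [AddCommGroup C] [Module k C]

/-- Left `(A,α)`-action on `A ⊗ C`: `a(a'⊗c) = α⁻¹(a)a' ⊗ γ(c)`. -/
noncomputable def entwLact (α : A ≃ₗ[k] A) (γ : C ≃ₗ[k] C) (mul : A →ₗ[k] A →ₗ[k] A) :
    A →ₗ[k] (A ⊗[k] C) →ₗ[k] A ⊗[k] C :=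
  TensorProduct.curry
    ((TensorProduct.map
        ((TensorProduct.lift mul) ∘ₗ TensorProduct.map α.symm.toLinearMap LinearMap.id)
        γ.toLinearMap) ∘ₗ (TensorProduct.assoc k A A C).symm.toLinearMap)

/-- Right `(A,α)`-action on `A ⊗ C`: `(a'⊗c)a = a'·α⁻¹(a)_κ ⊗ γ(c^κ)`. -/
noncomputable def entwRact (α : A ≃ₗ[k] A) (γ : C ≃ₗ[k] C) (mul : A →ₗ[k] A →ₗ[k] A)
    (ψ : C ⊗[k] A →ₗ[k] A ⊗[k] C) : (A ⊗[k] C) →ₗ[k] A →ₗ[k] A ⊗[k] C :=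
  TensorProduct.curry
    ((TensorProduct.map (TensorProduct.lift mul) γ.toLinearMap) ∘ₗ
      (TensorProduct.assoc k A A C).symm.toLinearMap ∘ₗ
        (TensorProduct.map LinearMap.id ψ) ∘ₗ
          (TensorProduct.assoc k A C A).toLinearMap ∘ₗ
            (TensorProduct.map LinearMap.id α.symm.toLinearMap))

/-- Comultiplication of the Hom-coring `A ⊗ C`:
`Δ(a⊗c) = (α⁻¹(a)⊗c₁) ⊗ (1⊗c₂)`. -/
noncomputable def entwComul (α : A ≃ₗ[k] A) (one : A) (ΔC : C →ₗ[k] C ⊗[k] C) :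
    (A ⊗[k] C) →ₗ[k] (A ⊗[k] C) ⊗[k] (A ⊗[k] C) :=
  (TensorProduct.map LinearMap.id ((TensorProduct.mk k A C) one)) ∘ₗ
    (TensorProduct.assoc k A C C).symm.toLinearMap ∘ₗ
      (TensorProduct.map α.symm.toLinearMap ΔC)

/-- Counit of the Hom-coring `A ⊗ C`: `ε(a⊗c) = α(a)·ε_C(c)`. -/
noncomputable def entwCounit (α : A ≃ₗ[k] A) (εC : C →ₗ[k] k) :
    (A ⊗[k] C) →ₗ[k] A :=
  α.toLinearMap ∘ₗ (TensorProduct.rid k A).toLinearMap ∘ₗ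
    TensorProduct.map LinearMap.id εC

/-- The ψ-twisted convolution (Koppinen) product:
`(f *_ψ g)(c) = f(c₂)_κ · g(c₁^κ)`. -/
noncomputable def koppinenMul (mul : A →ₗ[k] A →ₗ[k] A) (Δ : C →ₗ[k] C ⊗[k] C)
    (ψ : C ⊗[k] A →ₗ[k] A ⊗[k] C) (f g : C →ₗ[k] A) : C →ₗ[k] A :=
  (TensorProduct.lift mul) ∘ₗ (TensorProduct.map LinearMap.id g) ∘ₗ ψ ∘ₗ
    (TensorProduct.map LinearMap.id f) ∘ₗ Δ

/-- `ξ : A⊗C → A` is left `(A,α)`-linear (an element of `*C` for the coring `A⊗C`). -/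
def IsLeftALinearC (α : A ≃ₗ[k] A) (γ : C ≃ₗ[k] C) (mul : A →ₗ[k] A →ₗ[k] A)
    (ξ : A ⊗[k] C →ₗ[k] A) : Prop :=
  (∀ a x, ξ ((entwLact α γ mul) a x) = mul a (ξ x)) ∧
  (∀ x, ξ (TensorProduct.congr α γ x) = α (ξ x))

/-- The product `(ξ *ˡ ξ')(x) = ξ(x₁ · ξ'(x₂))` on `*C` for the coring `A⊗C`. -/
noncomputable def lconvC (α : A ≃ₗ[k] A) (γ : C ≃ₗ[k] C) (mul : A →ₗ[k] A →ₗ[k] A)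
    (one : A) (ΔC : C →ₗ[k] C ⊗[k] C) (ψ : C ⊗[k] A →ₗ[k] A ⊗[k] C)
    (ξ ξ' : A ⊗[k] C →ₗ[k] A) : A ⊗[k] C →ₗ[k] A :=
  ξ ∘ₗ (TensorProduct.lift ((entwRact α γ mul ψ).compl₂ ξ')) ∘ₗ entwComul α one ΔC

/-- For a Hom-entwining structure `[(A,α),(C,γ)]_ψ` with associated
Hom-coring `A⊗C`, the map `φ : *C → Hom^H(C,A)`, `φ(ξ)(c) = ξ(1 ⊗ γ⁻¹(c))`, is an
algebra anti-isomorphism from `(*C, *ˡ, ε_C)` to the Koppinen smash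
`(Hom^H(C,A), *_ψ, ηε)`, with inverse `f ↦ (a⊗c ↦ a·f(c))`:
`φ(ξ *ˡ ξ') = φ(ξ') *_ψ φ(ξ)` and `φ(ε_C) = ηε`. -/
theorem dual_anti_iso_koppinen
    (α : A ≃ₗ[k] A) (mul : A →ₗ[k] A →ₗ[k] A) (one : A)
    (γ : C ≃ₗ[k] C) (ΔC : C →ₗ[k] C ⊗[k] C) (εC : C →ₗ[k] k)
    (ψ : C ⊗[k] A →ₗ[k] A ⊗[k] C)
    (hA : IsHomAlgebra α mul one) (hC : IsHomCoalgebra γ ΔC εC)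
    (hψ : IsHomEntwining α γ mul one ΔC εC ψ) :
    ∀ Φ : (A ⊗[k] C →ₗ[k] A) → (C →ₗ[k] A),
      Φ = (fun ξ => ξ ∘ₗ ((TensorProduct.mk k A C) one ∘ₗ γ.symm.toLinearMap)) →
    ∀ Ψ : (C →ₗ[k] A) → (A ⊗[k] C →ₗ[k] A),
      Ψ = (fun f => TensorProduct.lift (mul.compl₂ f)) →
    -- Φ lands in Hom^H(C,A) and Ψ lands in *C
    (∀ ξ, IsLeftALinearC α γ mul ξ → ∀ c, (Φ ξ) (γ c) = α ((Φ ξ) c)) ∧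
    (∀ f : C →ₗ[k] A, (∀ c, f (γ c) = α (f c)) → IsLeftALinearC α γ mul (Ψ f)) ∧
    -- Φ and Ψ are mutually inverse
    (∀ ξ, IsLeftALinearC α γ mul ξ → Ψ (Φ ξ) = ξ) ∧
    (∀ f : C →ₗ[k] A, (∀ c, f (γ c) = α (f c)) → Φ (Ψ f) = f) ∧
    -- Φ is an algebra anti-morphism
    (∀ ξ ξ', IsLeftALinearC α γ mul ξ → IsLeftALinearC α γ mul ξ' →
        Φ (lconvC α γ mul one ΔC ψ ξ ξ') = koppinenMul mul ΔC ψ (Φ ξ') (Φ ξ)) ∧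
    Φ (entwCounit α εC) = εC.smulRight one := by
  obtain ⟨hassoc, hone_r, hone_l, hαmul, hαone⟩ := hA
  obtain ⟨-, -, -, hΔγ, hεγ⟩ := hC
  obtain ⟨-, -, -, -, hψmor⟩ := hψ
  intro Φ hΦ Ψ hΨ
  subst hΦ hΨ
  have hαsone : α.symm one = one := by
    simpa using (congrArg α.symm hαone).symm
  have hlact : ∀ (a a' : A) (c : C),
      entwLact α γ mul a (a' ⊗ₜ c) = mul (α.symm a) a' ⊗ₜ γ c := by
    intro a a' c
    simp [entwLact]
  have hract : ∀ (a' : A) (c : C) (a : A),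
      entwRact α γ mul ψ (a' ⊗ₜ c) a
        = TensorProduct.map (mul a') γ.toLinearMap (ψ (c ⊗ₜ α.symm a)) := by
    intro a' c a
    have haux : ∀ t : A ⊗[k] C,
        TensorProduct.map (TensorProduct.lift mul) γ.toLinearMap
          ((TensorProduct.assoc k A A C).symm (a' ⊗ₜ t))
          = TensorProduct.map (mul a') γ.toLinearMap t := by
      intro t
      induction t using TensorProduct.induction_on with
      | zero => simp
      | tmul p q => simp
      | add x y hx hy => simp [tmul_add, hx, hy]
    simp [entwRact, haux]
  have hcomul : ∀ (a : A) (c : C),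
      entwComul α one ΔC (a ⊗ₜ c)
        = TensorProduct.map (TensorProduct.mk k A C (α.symm a))
            (TensorProduct.mk k A C one) (ΔC c) := by
    intro a c
    have haux : ∀ t : C ⊗[k] C,
        TensorProduct.map LinearMap.id ((TensorProduct.mk k A C) one)
          ((TensorProduct.assoc k A C C).symm (α.symm a ⊗ₜ t))
          = TensorProduct.map (TensorProduct.mk k A C (α.symm a))
              (TensorProduct.mk k A C one) t := by
      intro t
      induction t using TensorProduct.induction_on with
      | zero => simp
      | tmul p q => simp
      | add x y hx hy => simp [tmul_add, hx, hy]
    simp [entwComul, haux]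
  -- key evaluation lemmas for left A-linear ξ
  have hγξ : ∀ ξ, IsLeftALinearC α γ mul ξ →
      ∀ c, ξ (one ⊗ₜ γ c) = α (ξ (one ⊗ₜ c)) := by
    intro ξ hξ c
    have := hξ.2 (one ⊗ₜ c)
    simpa [hαone] using this
  have hval : ∀ ξ, IsLeftALinearC α γ mul ξ →
      ∀ (a : A) (c : C), ξ (a ⊗ₜ c) = mul a (ξ (one ⊗ₜ γ.symm c)) := by
    intro ξ hξ a c
    have := hξ.1 a (one ⊗ₜ γ.symm c)
    rw [hlact] at this
    simpa [hone_r, α.apply_symm_apply] using this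
  refine ⟨?_, ?_, ?_, ?_, ?_, ?_⟩
  · -- Φ lands in Hom^H(C,A)
    intro ξ hξ c
    have := hγξ ξ hξ (γ.symm c)
    simpa [γ.apply_symm_apply] using this
  · -- Ψ lands in *C
    intro f hf
    constructor
    · intro a x
      induction x using TensorProduct.induction_on with
      | zero => simp
      | tmul a' c =>
          rw [hlact]
          have h1 := hassoc (α.symm a) a' (f c)
          simp only [α.apply_symm_apply] at h1
          simp [hf c, ← h1]
      | add x y hx hy => simp [hx, hy]
    · intro x
      induction x using TensorProduct.induction_on with
      | zero => simp
      | tmul a c => simp [hf c, hαmul]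
      | add x y hx hy => simp [hx, hy]
  · -- Ψ ∘ Φ = id
    intro ξ hξ
    apply TensorProduct.ext'
    intro a c
    simp [hval ξ hξ a c]
  · -- Φ ∘ Ψ = id
    intro f hf
    apply LinearMap.ext
    intro c
    have := hf (γ.symm c)
    simp only [γ.apply_symm_apply] at this
    simp [hone_l, this]
  · -- anti-morphism property
    intro ξ ξ' hξ hξ'
    apply LinearMap.ext
    intro c
    -- inner lemma
    have hinner : ∀ s : A ⊗[k] C,
        ξ (TensorProduct.map (mul one) γ.toLinearMap s)
          = TensorProduct.lift mul
              (TensorProduct.map LinearMap.id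
                (ξ ∘ₗ ((TensorProduct.mk k A C) one ∘ₗ γ.symm.toLinearMap))
                (TensorProduct.map α.toLinearMap γ.toLinearMap s)) := by
      intro s
      induction s using TensorProduct.induction_on with
      | zero => simp
      | tmul p q =>
          simp only [TensorProduct.map_tmul, TensorProduct.lift.tmul,
            LinearMap.comp_apply, LinearEquiv.coe_coe, TensorProduct.mk_apply,
            LinearMap.id_coe, id_eq]
          rw [hval ξ hξ (mul one p) (γ q), hone_l, γ.symm_apply_apply]
      | add x y hx hy => simp [hx, hy]
    have hξ'val : ∀ d₂ : C,
        ξ' (one ⊗ₜ d₂) = α (ξ' (one ⊗ₜ γ.symm d₂)) := by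
      intro d₂
      have := hγξ ξ' hξ' (γ.symm d₂)
      simpa [γ.apply_symm_apply] using this
    have key : ∀ t : C ⊗[k] C,
        ξ (TensorProduct.lift ((entwRact α γ mul ψ).compl₂ ξ')
            (TensorProduct.map (TensorProduct.mk k A C one)
              (TensorProduct.mk k A C one) t))
          = TensorProduct.lift mul
              (TensorProduct.map LinearMap.id
                  (ξ ∘ₗ ((TensorProduct.mk k A C) one ∘ₗ γ.symm.toLinearMap))
                (ψ (TensorProduct.map LinearMap.id
                    (ξ' ∘ₗ ((TensorProduct.mk k A C) one ∘ₗ γ.symm.toLinearMap))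
                  (TensorProduct.map γ.toLinearMap γ.toLinearMap t)))) := by
      intro t
      induction t using TensorProduct.induction_on with
      | zero => simp
      | tmul d₁ d₂ =>
          simp only [TensorProduct.map_tmul, TensorProduct.mk_apply,
            TensorProduct.lift.tmul, LinearMap.compl₂_apply, LinearMap.comp_apply,
            LinearEquiv.coe_coe, LinearMap.id_coe, id_eq, γ.symm_apply_apply]
          rw [hract, hξ'val d₂, α.symm_apply_apply, hψmor, hinner]
      | add x y hx hy => simp [hx, hy]
    simp only [lconvC, koppinenMul, LinearMap.comp_apply, LinearEquiv.coe_coe,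
      TensorProduct.mk_apply]
    rw [hcomul, hαsone, key (ΔC (γ.symm c)), ← hΔγ, γ.apply_symm_apply]
  · -- counit
    apply LinearMap.ext
    intro c
    have hε : εC (γ.symm c) = εC c := by
      have := hεγ (γ.symm c)
      simpa [γ.apply_symm_apply] using this.symm
    simp [entwCounit, hε, hαone]

end HomPaper
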